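/- Let d > 1 and 1 ≤ p ≤ d be integers, let even integer c ≥ 2 satisfy c ∣ 2p and p + c/2 ≤ d. Then E_DS[p,d] / ⌈2p/c⌉ > E_DS[p + c/2, d] / ⌈2(p + c/2)/c⌉; that is, with c parallel cores performing function evaluations, the expected decrease per unit of work of the direct-search iteration strictly decreases when the subspace dimension increases from p to p + c/2. -/

import Mathlib

open MeasureTheory Real

noncomputable def sphereUniform (d : ℕ) :
    Measure (Metric.sphere (0 : EuclideanSpace ℝ (Fin d)) 1) :=
  ((volume : Measure (EuclideanSpace ℝ (Fin d))).toSphere Set.univ)⁻¹ •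
    (volume : Measure (EuclideanSpace ℝ (Fin d))).toSphere

/-- `E_DS[p,d] = ∫_{S^{d-1}} max_{1 ≤ i ≤ p} |x_i| dσ_d(x)`. -/
noncomputable def E_DS (p d : ℕ) : ℝ :=
  ∫ x : Metric.sphere (0 : EuclideanSpace ℝ (Fin d)) 1,
    (⨆ (i : Fin d) (_ : (i : ℕ) < p), |(x : EuclideanSpace ℝ (Fin d)) i|)
    ∂(sphereUniform d)

namespace EDSAux

open Metric Set Finset
open scoped ENNReal Pointwise

variable {d : ℕ}

local notation "Euc" d => EuclideanSpace ℝ (Fin d)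
local notation "Sph" d => Metric.sphere (0 : EuclideanSpace ℝ (Fin d)) 1

/-! ### The sphere measure is a probability measure -/

lemma toSphere_univ_eq (hd : 0 < d) :
    (volume : Measure (Euc d)).toSphere Set.univ
      = (d : ℝ≥0∞) * volume (ball (0 : Euc d) 1) := by
  rw [Measure.toSphere_apply_univ, finrank_euclideanSpace_fin]

lemma toSphere_univ_ne_zero (hd : 0 < d) :
    (volume : Measure (Euc d)).toSphere Set.univ ≠ 0 := by
  rw [toSphere_univ_eq hd]
  exact mul_ne_zero (Nat.cast_ne_zero.mpr hd.ne')
    (measure_ball_pos _ _ one_pos).ne'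

lemma toSphere_univ_ne_top (hd : 0 < d) :
    (volume : Measure (Euc d)).toSphere Set.univ ≠ ⊤ := by
  rw [toSphere_univ_eq hd]
  exact ENNReal.mul_ne_top (ENNReal.natCast_ne_top d) measure_ball_lt_top.ne

lemma isProb (hd : 0 < d) : IsProbabilityMeasure (sphereUniform d) := by
  constructor
  rw [sphereUniform, Measure.smul_apply, smul_eq_mul,
    ENNReal.inv_mul_cancel (toSphere_univ_ne_zero hd) (toSphere_univ_ne_top hd)]

/-! ### Permutation invariance -/

noncomputable def permIso (e : Equiv.Perm (Fin d)) : (Euc d) ≃ₗᵢ[ℝ] (Euc d) :=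
  LinearIsometryEquiv.piLpCongrLeft 2 ℝ ℝ e

lemma permIso_apply (e : Equiv.Perm (Fin d)) (x : Euc d) (i : Fin d) :
    permIso e x i = x (e.symm i) := rfl

lemma permIso_symm (e : Equiv.Perm (Fin d)) : (permIso e).symm = permIso e.symm :=
  LinearIsometryEquiv.piLpCongrLeft_symm (p := 2) (𝕜 := ℝ) (E := ℝ) e

noncomputable def sphereMap (e : Equiv.Perm (Fin d)) : (Sph d) → (Sph d) := fun x =>
  ⟨permIso e x, by
    have h := x.2
    rw [mem_sphere_zero_iff_norm] at h ⊢
    rw [LinearIsometryEquiv.norm_map]; exact h⟩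

lemma sphereMap_coe (e : Equiv.Perm (Fin d)) (x : Sph d) :
    (sphereMap e x : Euc d) = permIso e x := rfl

noncomputable def sphereHomeo (e : Equiv.Perm (Fin d)) : (Sph d) ≃ₜ (Sph d) where
  toFun := sphereMap e
  invFun := sphereMap e.symm
  left_inv x := by
    apply Subtype.ext
    rw [sphereMap_coe, sphereMap_coe, ← permIso_symm, LinearIsometryEquiv.symm_apply_apply]
  right_inv x := by
    apply Subtype.ext
    rw [sphereMap_coe, sphereMap_coe, ← permIso_symm, LinearIsometryEquiv.apply_symm_apply]
  continuous_toFun := Continuous.subtype_mk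
    ((permIso e).continuous.comp continuous_subtype_val) _
  continuous_invFun := Continuous.subtype_mk
    ((permIso e.symm).continuous.comp continuous_subtype_val) _

lemma volume_preimage_permIso (e : Equiv.Perm (Fin d)) (C : Set (Euc d)) :
    volume ((permIso e) ⁻¹' C) = volume C := by
  have hme : ((permIso e).toHomeomorph.toMeasurableEquiv : (Euc d) → (Euc d))
      = (permIso e : (Euc d) → (Euc d)) := rfl
  calc volume ((permIso e) ⁻¹' C)
      = volume.map (permIso e).toHomeomorph.toMeasurableEquiv C := by
        rw [MeasurableEquiv.map_apply]; rfl
    _ = volume C := by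
        rw [show Measure.map (permIso e).toHomeomorph.toMeasurableEquiv
              (volume : Measure (Euc d)) = Measure.map (permIso e) volume from by rw [hme],
          (permIso e).measurePreserving.map_eq]

lemma map_toSphere (e : Equiv.Perm (Fin d)) :
    ((volume : Measure (Euc d)).toSphere).map (sphereMap e)
      = (volume : Measure (Euc d)).toSphere := by
  have hmeas : Measurable (sphereMap e) := (sphereHomeo e).continuous.measurable
  refine Measure.ext fun s hs => ?_
  rw [Measure.map_apply hmeas hs, Measure.toSphere_apply' _ (hmeas hs),
    Measure.toSphere_apply' _ hs]
  congr 1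
  have h1 : (Subtype.val '' (sphereMap e ⁻¹' s)) = (permIso e) ⁻¹' (Subtype.val '' s) := by
    ext y
    constructor
    · rintro ⟨z, hz, rfl⟩
      exact ⟨sphereMap e z, hz, rfl⟩
    · rintro ⟨w, hw, hwy⟩
      have hy : y ∈ (Sph d) := by
        rw [mem_sphere_zero_iff_norm, ← LinearIsometryEquiv.norm_map (permIso e) y, ← hwy,
          ← mem_sphere_zero_iff_norm]
        exact w.2
      refine ⟨⟨y, hy⟩, ?_, rfl⟩
      show sphereMap e ⟨y, hy⟩ ∈ s
      have : sphereMap e ⟨y, hy⟩ = w := Subtype.ext hwy.symm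
      rw [this]; exact hw
  rw [h1]
  have h2 : (Ioo (0:ℝ) 1) • ((permIso e) ⁻¹' (Subtype.val '' s))
      = (permIso e) ⁻¹' ((Ioo (0:ℝ) 1) • (Subtype.val '' s)) := by
    ext z
    constructor
    · rintro ⟨r, hr, b, hb, rfl⟩
      refine ⟨r, hr, permIso e b, hb, ?_⟩
      exact ((permIso e).map_smul r b).symm
    · rintro ⟨r, hr, a, ha, hra⟩
      refine ⟨r, hr, (permIso e).symm a, ?_, ?_⟩
      · show permIso e ((permIso e).symm a) ∈ Subtype.val '' s
        rw [LinearIsometryEquiv.apply_symm_apply]; exact ha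
      · have hra' : r • a = permIso e z := hra
        have hz : (permIso e).symm (r • a) = z := by
          rw [hra', LinearIsometryEquiv.symm_apply_apply]
        rw [← hz]
        exact ((permIso e).symm.map_smul r a).symm
  rw [h2, volume_preimage_permIso]

lemma map_sphereUniform (e : Equiv.Perm (Fin d)) :
    (sphereUniform d).map (sphereMap e) = sphereUniform d := by
  rw [sphereUniform, Measure.map_smul, map_toSphere]

lemma integral_comp_sphereMap (e : Equiv.Perm (Fin d)) (g : (Sph d) → ℝ) :
    ∫ x, g (sphereMap e x) ∂(sphereUniform d) = ∫ x, g x ∂(sphereUniform d) :=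
  MeasurePreserving.integral_comp ⟨(sphereHomeo e).continuous.measurable, map_sphereUniform e⟩
    (sphereHomeo e).measurableEmbedding g

/-! ### The max function over a finite coordinate set -/

lemma sup'_congr_set {α : Type*} {A B : Finset α} (hA : A.Nonempty) (hB : B.Nonempty)
    (h : A = B) (f : α → ℝ) : A.sup' hA f = B.sup' hB f := by
  subst h; rfl

noncomputable def msup (S : Finset (Fin d)) (hS : S.Nonempty) (x : Euc d) : ℝ :=
  S.sup' hS fun i => |x i|

lemma le_msup {S : Finset (Fin d)} (hS : S.Nonempty) {i : Fin d} (hi : i ∈ S) (x : Euc d) :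
    |x i| ≤ msup S hS x := by
  unfold msup; exact Finset.le_sup' (fun i => |x i|) hi

lemma msup_nonneg {S : Finset (Fin d)} (hS : S.Nonempty) (x : Euc d) :
    0 ≤ msup S hS x := by
  exact le_trans (abs_nonneg _) (le_msup hS hS.choose_spec x)

lemma continuous_msup {S : Finset (Fin d)} (hS : S.Nonempty) :
    Continuous (fun x : Sph d => msup S hS ↑x) := by
  apply Continuous.finset_sup'_apply hS
  intro i _
  exact ((EuclideanSpace.proj (𝕜 := ℝ) i).continuous.comp continuous_subtype_val).abs

lemma integrable_msup (hd : 0 < d) {S : Finset (Fin d)} (hS : S.Nonempty) :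
    Integrable (fun x : Sph d => msup S hS ↑x) (sphereUniform d) := by
  haveI := isProb hd
  have := ((continuous_msup (d := d) hS).continuousOn).integrableOn_compact
    (μ := sphereUniform d) (isCompact_univ (X := Sph d))
  rwa [integrableOn_univ] at this

lemma integral_msup_congr_card (hd : 0 < d) {S T : Finset (Fin d)} (hS : S.Nonempty)
    (hT : T.Nonempty) (h : S.card = T.card) :
    ∫ x : Sph d, msup S hS ↑x ∂(sphereUniform d)
      = ∫ x : Sph d, msup T hT ↑x ∂(sphereUniform d) := by
  classical
  have hcard : Fintype.card {x : Fin d // x ∈ T} = Fintype.card {x : Fin d // x ∈ S} := by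
    simp only [Fintype.card_coe, h]
  have hcardc : Fintype.card {x : Fin d // ¬ x ∈ T} = Fintype.card {x : Fin d // ¬ x ∈ S} := by
    rw [Fintype.card_subtype_compl, Fintype.card_subtype_compl, hcard]
  let e₁ : {x : Fin d // x ∈ T} ≃ {x : Fin d // x ∈ S} := Fintype.equivOfCardEq hcard
  let e₂ : {x : Fin d // ¬ x ∈ T} ≃ {x : Fin d // ¬ x ∈ S} := Fintype.equivOfCardEq hcardc
  let e : Equiv.Perm (Fin d) := Equiv.subtypeCongr e₁ e₂
  have himg : T.image e = S := by
    apply Finset.eq_of_subset_of_card_le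
    · intro x hx
      rw [Finset.mem_image] at hx
      obtain ⟨t, ht, rfl⟩ := hx
      have : e t = (e₁ ⟨t, ht⟩ : Fin d) := by
        simp [e, Equiv.subtypeCongr, ht]
      rw [this]
      exact (e₁ ⟨t, ht⟩).2
    · rw [Finset.card_image_of_injective _ e.injective, h]
  have himg' : S.image (e.symm : Fin d → Fin d) = T := by
    rw [← himg, Finset.image_image]
    have : ((e.symm : Fin d → Fin d) ∘ (e : Fin d → Fin d)) = id := by
      funext z; simp
    rw [this, Finset.image_id]
  have key : ∀ x : Sph d, msup S hS ((sphereMap e x : Euc d)) = msup T hT ↑x := by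
    intro x
    unfold msup
    calc S.sup' hS (fun i => |(sphereMap e x : Euc d) i|)
        = S.sup' hS ((fun i => |(x : Euc d) i|) ∘ (e.symm : Fin d → Fin d)) := rfl
      _ = (S.image (e.symm : Fin d → Fin d)).sup' (hS.image _) (fun i => |(x : Euc d) i|) :=
          Finset.sup'_comp_eq_image hS _
      _ = T.sup' hT (fun i => |(x : Euc d) i|) := sup'_congr_set _ hT himg' _
  calc ∫ x : Sph d, msup S hS ↑x ∂(sphereUniform d)
      = ∫ x : Sph d, msup S hS ((sphereMap e x : Euc d)) ∂(sphereUniform d) :=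
        (integral_comp_sphereMap e (fun x => msup S hS ↑x)).symm
    _ = ∫ x : Sph d, msup T hT ↑x ∂(sphereUniform d) := by
        exact integral_congr_ae (Filter.Eventually.of_forall fun x => key x)

/-! ### Cardinalities of coordinate filters -/

lemma image_val_filter_lt (q : ℕ) (hq : q ≤ d) :
    (Finset.univ.filter fun i : Fin d => (i : ℕ) < q).image Fin.val = Finset.range q := by
  ext a
  simp only [Finset.mem_image, Finset.mem_filter, Finset.mem_univ, true_and, Finset.mem_range]
  constructor
  · rintro ⟨i, hi, rfl⟩; exact hi
  · intro ha; exact ⟨⟨a, lt_of_lt_of_le ha hq⟩, ha, rfl⟩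

lemma card_filter_lt (q : ℕ) (hq : q ≤ d) :
    (Finset.univ.filter fun i : Fin d => (i : ℕ) < q).card = q := by
  rw [← Finset.card_image_of_injective _ Fin.val_injective, image_val_filter_lt q hq,
    Finset.card_range]

lemma filter_lt_nonempty (q : ℕ) (hq1 : 1 ≤ q) (hq : q ≤ d) :
    (Finset.univ.filter fun i : Fin d => (i : ℕ) < q).Nonempty := by
  rw [← Finset.card_pos, card_filter_lt q hq]; omega

lemma iSup_eq_msup (p : ℕ) (hp : 1 ≤ p) (hpd : p ≤ d) (x : Euc d) :
    (⨆ (i : Fin d) (_ : (i : ℕ) < p), |x i|)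
      = msup (Finset.univ.filter fun i : Fin d => (i : ℕ) < p) (filter_lt_nonempty p hp hpd) x := by
  have hd0 : 0 < d := lt_of_lt_of_le hp hpd
  haveI : Nonempty (Fin d) := ⟨⟨0, hd0⟩⟩
  apply le_antisymm
  · apply ciSup_le
    intro i
    by_cases hi : (i : ℕ) < p
    · haveI : Nonempty ((i : ℕ) < p) := ⟨hi⟩
      rw [ciSup_const]
      exact le_msup _ (Finset.mem_filter.2 ⟨Finset.mem_univ i, hi⟩) x
    · haveI : IsEmpty ((i : ℕ) < p) := ⟨hi⟩
      rw [Real.iSup_of_isEmpty]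
      exact msup_nonneg _ x
  · apply Finset.sup'_le
    intro i hi
    rw [Finset.mem_filter] at hi
    have hb : BddAbove (Set.range fun i : Fin d => ⨆ (_ : (i : ℕ) < p), |x i|) :=
      Finite.bddAbove_range _
    refine le_ciSup_of_le hb i ?_
    haveI : Nonempty ((i : ℕ) < p) := ⟨hi.2⟩
    rw [ciSup_const]

lemma E_DS_eq_integral_msup (p : ℕ) (hp : 1 ≤ p) (hpd : p ≤ d) :
    E_DS p d = ∫ x : Sph d,
      msup (Finset.univ.filter fun i : Fin d => (i : ℕ) < p) (filter_lt_nonempty p hp hpd) ↑x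
      ∂(sphereUniform d) := by
  unfold E_DS
  exact integral_congr_ae (Filter.Eventually.of_forall fun x => iSup_eq_msup p hp hpd ↑x)

/-! ### Hyperplane slices of the sphere are null -/

lemma slice_null (hd : 0 < d) (i : Fin d) :
    sphereUniform d {x : Sph d | (x : Euc d) i = 0} = 0 := by
  have hcont : Continuous fun x : Sph d => (x : Euc d) i :=
    (EuclideanSpace.proj (𝕜 := ℝ) i).continuous.comp continuous_subtype_val
  have hs : MeasurableSet {x : Sph d | (x : Euc d) i = 0} :=
    hcont.measurable (measurableSet_singleton 0)
  rw [sphereUniform, Measure.smul_apply, Measure.toSphere_apply' _ hs]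
  set K : Submodule ℝ (Euc d) :=
    LinearMap.ker ((EuclideanSpace.proj (𝕜 := ℝ) i : (Euc d) →L[ℝ] ℝ) : (Euc d) →ₗ[ℝ] ℝ) with hKdef
  have hK : K ≠ ⊤ := by
    intro htop
    have h1 : EuclideanSpace.single i (1 : ℝ) ∈ K := htop ▸ Submodule.mem_top
    rw [hKdef, LinearMap.mem_ker] at h1
    have h2 : EuclideanSpace.single i (1 : ℝ) i = 0 := h1
    rw [EuclideanSpace.single_apply] at h2
    simp at h2
  have hsub : (Set.Ioo (0:ℝ) 1) • (Subtype.val '' {x : Sph d | (x : Euc d) i = 0})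
      ⊆ (K : Set (Euc d)) := by
    rintro z ⟨r, hr, y, hy, rfl⟩
    obtain ⟨w, hw, rfl⟩ := hy
    have hw0 : (w : Euc d) i = 0 := hw
    show r • (w : Euc d) ∈ (K : Set (Euc d))
    rw [SetLike.mem_coe, hKdef, LinearMap.mem_ker]
    show r * (w : Euc d) i = 0
    rw [hw0, mul_zero]
  have h0 : volume ((Set.Ioo (0:ℝ) 1) • (Subtype.val '' {x : Sph d | (x : Euc d) i = 0})) = 0 :=
    measure_mono_null hsub (Measure.addHaar_submodule _ K hK)
  rw [h0, mul_zero, smul_eq_mul, mul_zero]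

/-! ### Block decomposition -/

def Tq (m k : ℕ) : Finset (Fin d) := Finset.univ.filter fun i : Fin d => (i : ℕ) < k * m + m

def Sj (m k j : ℕ) : Finset (Fin d) :=
  Finset.univ.filter fun i : Fin d =>
    (i : ℕ) < k * m + m ∧ ¬(j * m ≤ (i : ℕ) ∧ (i : ℕ) < j * m + m)

lemma Tq_nonempty {m k : ℕ} (hm : 1 ≤ m) (hq : k * m + m ≤ d) : (Tq m k : Finset (Fin d)).Nonempty :=
  filter_lt_nonempty _ (le_trans hm (Nat.le_add_left m _)) hq

lemma Sj_nonempty {m k : ℕ} (hm : 1 ≤ m) (hk : 1 ≤ k) (hq : k * m + m ≤ d) (j : ℕ) :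
    (Sj m k j : Finset (Fin d)).Nonempty := by
  have hmm : m ≤ k * m + m := Nat.le_add_left m _
  have hkmlt : k * m < k * m + m := Nat.lt_add_of_pos_right hm
  rcases Nat.eq_zero_or_pos j with rfl | hj
  · refine ⟨⟨k * m, lt_of_lt_of_le hkmlt hq⟩, ?_⟩
    simp only [Sj, Finset.mem_filter, Finset.mem_univ, true_and, Fin.val_mk]
    refine ⟨hkmlt, ?_⟩
    rintro ⟨h1, h2⟩
    rw [zero_mul, zero_add] at h2
    have : m ≤ k * m := Nat.le_mul_of_pos_left m hk
    exact absurd h2 (not_lt.2 this)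
  · refine ⟨⟨0, lt_of_lt_of_le (lt_of_lt_of_le hm hmm) hq⟩, ?_⟩
    simp only [Sj, Finset.mem_filter, Finset.mem_univ, true_and, Fin.val_mk]
    refine ⟨lt_of_lt_of_le hm hmm, ?_⟩
    rintro ⟨h1, h2⟩
    have : 1 * 1 ≤ j * m := Nat.mul_le_mul hj hm
    rw [one_mul] at this
    exact Nat.not_succ_le_zero 0 (le_trans this h1)

lemma card_Sj {m k : ℕ} (hq : k * m + m ≤ d) {j : ℕ} (hj : j ≤ k) :
    (Sj m k j : Finset (Fin d)).card = k * m := by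
  have himg : (Sj m k j : Finset (Fin d)).image Fin.val
      = Finset.range (k * m + m) \ Finset.Ico (j * m) (j * m + m) := by
    ext a
    simp only [Sj, Finset.mem_image, Finset.mem_filter, Finset.mem_univ, true_and,
      Finset.mem_sdiff, Finset.mem_range, Finset.mem_Ico]
    constructor
    · rintro ⟨i, hi, rfl⟩; exact hi
    · intro ha; exact ⟨⟨a, lt_of_lt_of_le ha.1 hq⟩, ha, rfl⟩
  have hjk : j * m + m ≤ k * m + m :=
    Nat.add_le_add_right (Nat.mul_le_mul_right m hj) m
  have hsubset : Finset.Ico (j * m) (j * m + m) ⊆ Finset.range (k * m + m) := by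
    intro a ha
    rw [Finset.mem_Ico] at ha
    rw [Finset.mem_range]
    exact lt_of_lt_of_le ha.2 hjk
  rw [← Finset.card_image_of_injective _ Fin.val_injective, himg,
    Finset.card_sdiff_of_subset hsubset, Finset.card_range, Nat.card_Ico]
  rw [Nat.add_sub_cancel_left, Nat.add_sub_cancel]

lemma key_pointwise {m k : ℕ} (hm : 1 ≤ m) (hk : 1 ≤ k) (hq : k * m + m ≤ d) (x : Euc d) :
    (k : ℝ) * msup (Tq m k) (Tq_nonempty hm hq) x
      + (Finset.range (k + 1)).inf' ⟨0, by simp⟩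
          (fun j => msup (Sj m k j) (Sj_nonempty hm hk hq j) x)
      ≤ ∑ j ∈ Finset.range (k + 1), msup (Sj m k j) (Sj_nonempty hm hk hq j) x := by
  have hm0 : 0 < m := hm
  obtain ⟨i₀, hi₀, hmax⟩ := Finset.exists_mem_eq_sup' (Tq_nonempty (d := d) hm hq)
    (fun i : Fin d => |x i|)
  have hmax' : msup (Tq m k) (Tq_nonempty hm hq) x = |x i₀| := hmax
  have hi₀lt : (i₀ : ℕ) < k * m + m := (Finset.mem_filter.1 hi₀).2
  set j₀ := (i₀ : ℕ) / m with hj₀def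
  have hj₀mem : j₀ ∈ Finset.range (k + 1) := by
    rw [Finset.mem_range, hj₀def]
    rw [Nat.div_lt_iff_lt_mul hm0]
    calc (i₀ : ℕ) < k * m + m := hi₀lt
      _ = (k + 1) * m := by ring
  have hother : ∀ j ∈ Finset.range (k + 1), j ≠ j₀ → i₀ ∈ (Sj m k j : Finset (Fin d)) := by
    intro j hj hne
    simp only [Sj, Finset.mem_filter, Finset.mem_univ, true_and]
    refine ⟨hi₀lt, ?_⟩
    rintro ⟨h1, h2⟩
    apply hne
    have hle : j ≤ (i₀ : ℕ) / m := (Nat.le_div_iff_mul_le hm0).2 h1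
    have hlt : (i₀ : ℕ) / m < j + 1 := by
      rw [Nat.div_lt_iff_lt_mul hm0]
      calc (i₀ : ℕ) < j * m + m := h2
        _ = (j + 1) * m := by ring
    exact le_antisymm hle (Nat.lt_succ_iff.1 hlt)
  have hsplit : ∑ j ∈ (Finset.range (k + 1)).erase j₀,
        msup (Sj m k j) (Sj_nonempty hm hk hq j) x
      + msup (Sj m k j₀) (Sj_nonempty hm hk hq j₀) x
      = ∑ j ∈ Finset.range (k + 1), msup (Sj m k j) (Sj_nonempty hm hk hq j) x :=
    Finset.sum_erase_add _ _ hj₀mem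
  have hbound : ∀ j ∈ (Finset.range (k + 1)).erase j₀,
      msup (Tq m k) (Tq_nonempty hm hq) x ≤ msup (Sj m k j) (Sj_nonempty hm hk hq j) x := by
    intro j hj
    rw [Finset.mem_erase] at hj
    rw [hmax']
    exact le_msup _ (hother j hj.2 hj.1) x
  have hsum1 : (k : ℝ) * msup (Tq m k) (Tq_nonempty hm hq) x
      ≤ ∑ j ∈ (Finset.range (k + 1)).erase j₀, msup (Sj m k j) (Sj_nonempty hm hk hq j) x := by
    calc (k : ℝ) * msup (Tq m k) (Tq_nonempty hm hq) x
        = ∑ _j ∈ (Finset.range (k + 1)).erase j₀, msup (Tq m k) (Tq_nonempty hm hq) x := by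
          rw [Finset.sum_const, Finset.card_erase_of_mem hj₀mem, Finset.card_range,
            nsmul_eq_mul]
          norm_num
      _ ≤ _ := Finset.sum_le_sum hbound
  have hinf : (Finset.range (k + 1)).inf' ⟨0, by simp⟩
        (fun j => msup (Sj m k j) (Sj_nonempty hm hk hq j) x)
      ≤ msup (Sj m k j₀) (Sj_nonempty hm hk hq j₀) x := by
    exact Finset.inf'_le _ hj₀mem
  linarith

lemma integrable_infF (hd0 : 0 < d) {m k : ℕ} (hm : 1 ≤ m) (hk : 1 ≤ k) (hq : k * m + m ≤ d) :
    Integrable (fun x : Sph d => (Finset.range (k + 1)).inf' ⟨0, by simp⟩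
      (fun j => msup (Sj m k j) (Sj_nonempty hm hk hq j) ↑x)) (sphereUniform d) := by
  haveI := isProb hd0
  have hc : Continuous fun x : Sph d => (Finset.range (k + 1)).inf' ⟨0, by simp⟩
      (fun j => msup (Sj m k j) (Sj_nonempty hm hk hq j) ↑x) := by
    apply Continuous.finset_inf'_apply
    intro j _
    exact continuous_msup _
  have := hc.continuousOn.integrableOn_compact (μ := sphereUniform d)
    (isCompact_univ (X := Sph d))
  rwa [integrableOn_univ] at this

lemma integral_infF_pos {m k : ℕ} (hm : 1 ≤ m) (hk : 1 ≤ k) (hq : k * m + m ≤ d) :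
    0 < ∫ x : Sph d, (Finset.range (k + 1)).inf' ⟨0, by simp⟩
        (fun j => msup (Sj m k j) (Sj_nonempty hm hk hq j) ↑x) ∂(sphereUniform d) := by
  have hd0 : 0 < d := lt_of_lt_of_le (lt_of_lt_of_le hm (Nat.le_add_left m _)) hq
  haveI := isProb hd0
  set F : (Sph d) → ℝ := fun x => (Finset.range (k + 1)).inf' ⟨0, by simp⟩
      (fun j => msup (Sj m k j) (Sj_nonempty hm hk hq j) ↑x) with hFdef
  have hnn : 0 ≤ F := by
    intro x
    exact Finset.le_inf' _ _ (fun j _ => msup_nonneg _ _)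
  have hint : Integrable F (sphereUniform d) := integrable_infF hd0 hm hk hq
  rw [integral_pos_iff_support_of_nonneg hnn hint]
  have hnull : sphereUniform d {x : Sph d | F x = 0} = 0 := by
    have hsub : {x : Sph d | F x = 0} ⊆
        ⋃ j ∈ (↑(Finset.range (k + 1)) : Set ℕ),
          {x : Sph d | (x : Euc d) ((Sj_nonempty hm hk hq j).choose) = 0} := by
      intro x hx
      have hx0 : F x = 0 := hx
      obtain ⟨j, hj, hje⟩ := Finset.exists_mem_eq_inf'
        (⟨0, by simp⟩ : (Finset.range (k + 1)).Nonempty)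
        (fun j => msup (Sj m k j) (Sj_nonempty hm hk hq j) (↑x : Euc d))
      have hzero : msup (Sj m k j) (Sj_nonempty hm hk hq j) ↑x = 0 := by
        rw [← hje]; exact hx0
      have hle := le_msup (Sj_nonempty hm hk hq j) (Sj_nonempty hm hk hq j).choose_spec
        (↑x : Euc d)
      have habs : |(x : Euc d) ((Sj_nonempty hm hk hq j).choose)| = 0 :=
        le_antisymm (hzero ▸ hle) (abs_nonneg _)
      have hxz : (x : Euc d) ((Sj_nonempty hm hk hq j).choose) = 0 := abs_eq_zero.1 habs
      exact Set.mem_biUnion (Finset.mem_coe.2 hj) hxz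
    refine measure_mono_null hsub ?_
    refine (measure_biUnion_null_iff (Finset.range (k + 1)).countable_toSet).2 ?_
    intro j _
    exact slice_null hd0 _
  have hcov : (Set.univ : Set (Sph d)) ⊆ Function.support F ∪ {x : Sph d | F x = 0} := by
    intro x _
    by_cases hx : F x = 0
    · exact Or.inr hx
    · exact Or.inl hx
  have h1 : (1 : ℝ≥0∞) ≤ sphereUniform d (Function.support F) := by
    have hm1 := measure_mono (μ := sphereUniform d) hcov
    rw [measure_univ] at hm1
    calc (1 : ℝ≥0∞) ≤ sphereUniform d (Function.support F ∪ {x : Sph d | F x = 0}) := hm1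
      _ ≤ sphereUniform d (Function.support F) + sphereUniform d {x : Sph d | F x = 0} :=
          measure_union_le _ _
      _ = sphereUniform d (Function.support F) := by rw [hnull, add_zero]
  exact lt_of_lt_of_le zero_lt_one h1

lemma key_ineq (m k : ℕ) (hm : 1 ≤ m) (hk : 1 ≤ k) (hq : k * m + m ≤ d) :
    (k : ℝ) * E_DS (k * m + m) d < ((k : ℝ) + 1) * E_DS (k * m) d := by
  have hd0 : 0 < d := lt_of_lt_of_le (lt_of_lt_of_le hm (Nat.le_add_left m _)) hq
  haveI := isProb hd0
  have hkm1 : 1 ≤ k * m := by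
    have := Nat.mul_le_mul hk hm
    rwa [one_mul] at this
  have hkmd : k * m ≤ d := le_trans (Nat.le_add_right _ _) hq
  have hET : E_DS (k * m + m) d
      = ∫ x : Sph d, msup (Tq m k) (Tq_nonempty hm hq) ↑x ∂(sphereUniform d) :=
    E_DS_eq_integral_msup _ (le_trans hm (Nat.le_add_left m _)) hq
  have hES : ∀ j ∈ Finset.range (k + 1),
      (∫ x : Sph d, msup (Sj m k j) (Sj_nonempty hm hk hq j) ↑x ∂(sphereUniform d))
        = E_DS (k * m) d := by
    intro j hj
    have hcard : (Sj m k j : Finset (Fin d)).card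
        = (Finset.univ.filter fun i : Fin d => (i : ℕ) < k * m).card := by
      rw [card_Sj hq (Nat.lt_succ_iff.1 (Finset.mem_range.1 hj)), card_filter_lt _ hkmd]
    rw [integral_msup_congr_card hd0 _ (filter_lt_nonempty _ hkm1 hkmd) hcard]
    exact (E_DS_eq_integral_msup _ hkm1 hkmd).symm
  have hintS : ∀ j ∈ Finset.range (k + 1),
      Integrable (fun x : Sph d => msup (Sj m k j) (Sj_nonempty hm hk hq j) ↑x)
        (sphereUniform d) := fun j _ => integrable_msup hd0 _
  have hintT : Integrable (fun x : Sph d => msup (Tq m k) (Tq_nonempty hm hq) ↑x)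
      (sphereUniform d) := integrable_msup hd0 _
  have hintF := integrable_infF hd0 hm hk hq
  have step1 : ((k : ℝ) + 1) * E_DS (k * m) d
      = ∑ j ∈ Finset.range (k + 1),
          ∫ x : Sph d, msup (Sj m k j) (Sj_nonempty hm hk hq j) ↑x ∂(sphereUniform d) := by
    rw [Finset.sum_congr rfl hES, Finset.sum_const, Finset.card_range, nsmul_eq_mul]
    push_cast; ring
  have step2 : ∑ j ∈ Finset.range (k + 1),
        (∫ x : Sph d, msup (Sj m k j) (Sj_nonempty hm hk hq j) ↑x ∂(sphereUniform d))
      = ∫ x : Sph d, (∑ j ∈ Finset.range (k + 1),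
          msup (Sj m k j) (Sj_nonempty hm hk hq j) ↑x) ∂(sphereUniform d) :=
    (integral_finset_sum _ hintS).symm
  have step3 : (∫ x : Sph d, ((k : ℝ) * msup (Tq m k) (Tq_nonempty hm hq) ↑x
        + (Finset.range (k + 1)).inf' ⟨0, by simp⟩
            (fun j => msup (Sj m k j) (Sj_nonempty hm hk hq j) ↑x)) ∂(sphereUniform d))
      ≤ ∫ x : Sph d, (∑ j ∈ Finset.range (k + 1),
          msup (Sj m k j) (Sj_nonempty hm hk hq j) ↑x) ∂(sphereUniform d) := by
    refine integral_mono ((hintT.const_mul _).add hintF) (integrable_finset_sum _ hintS) ?_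
    intro x
    exact key_pointwise hm hk hq ↑x
  have step4 : (∫ x : Sph d, ((k : ℝ) * msup (Tq m k) (Tq_nonempty hm hq) ↑x
        + (Finset.range (k + 1)).inf' ⟨0, by simp⟩
            (fun j => msup (Sj m k j) (Sj_nonempty hm hk hq j) ↑x)) ∂(sphereUniform d))
      = (k : ℝ) * (∫ x : Sph d, msup (Tq m k) (Tq_nonempty hm hq) ↑x ∂(sphereUniform d))
        + ∫ x : Sph d, (Finset.range (k + 1)).inf' ⟨0, by simp⟩
            (fun j => msup (Sj m k j) (Sj_nonempty hm hk hq j) ↑x) ∂(sphereUniform d) := by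
    rw [integral_add (hintT.const_mul _) hintF, integral_const_mul]
  have hpos := integral_infF_pos hm hk hq
  rw [hET]
  linarith

end EDSAux

/-- With `c` parallel cores (`c` even, `c ∣ 2p`, `p + c/2 ≤ d`),
the direct-search expected decrease per unit of work satisfies
`E_DS[p,d]/⌈2p/c⌉ > E_DS[p+c/2,d]/⌈2(p+c/2)/c⌉`. -/
theorem E_DS_parallel_decreasing (d p c : ℕ) (hd : 1 < d) (hp : 1 ≤ p) (hpd : p ≤ d)
    (hc : 2 ≤ c) (hceven : 2 ∣ c) (hdiv : c ∣ 2 * p) (hpc : p + c / 2 ≤ d) :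
    E_DS p d / ((⌈(2 * (p : ℝ)) / (c : ℝ)⌉ : ℤ) : ℝ) >
      E_DS (p + c / 2) d / ((⌈(2 * (((p : ℝ) + (c : ℝ) / 2))) / (c : ℝ)⌉ : ℤ) : ℝ) := by
  obtain ⟨m, rfl⟩ := hceven
  have hm : 1 ≤ m := by omega
  have hm2 : (2 * m) / 2 = m := by omega
  rw [hm2] at hpc ⊢
  obtain ⟨k, hk⟩ : m ∣ p := by
    obtain ⟨t, ht⟩ := hdiv
    refine ⟨t, ?_⟩
    have h2 : 2 * p = 2 * (m * t) := by rw [ht]; ring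
    exact Nat.eq_of_mul_eq_mul_left (by norm_num) h2
  have hk1 : 1 ≤ k := by
    rcases Nat.eq_zero_or_pos k with rfl | h
    · rw [Nat.mul_zero] at hk; omega
    · exact h
  subst hk
  have hmR : ((2 * m : ℕ) : ℝ) ≠ 0 := Nat.cast_ne_zero.mpr (by omega)
  have h1 : (2 * ((m * k : ℕ) : ℝ)) / ((2 * m : ℕ) : ℝ) = ((k : ℕ) : ℝ) := by
    push_cast
    field_simp
  have h2 : (2 * (((m * k : ℕ) : ℝ) + ((2 * m : ℕ) : ℝ) / 2)) / ((2 * m : ℕ) : ℝ)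
      = ((k + 1 : ℕ) : ℝ) := by
    push_cast
    field_simp
  rw [h1, h2, Int.ceil_natCast, Int.ceil_natCast]
  have hkpos : (0 : ℝ) < (((k : ℕ) : ℤ) : ℝ) := by
    have : (0 : ℤ) < ((k : ℕ) : ℤ) := by exact_mod_cast hk1
    exact_mod_cast this
  have hk1pos : (0 : ℝ) < (((k + 1 : ℕ) : ℤ) : ℝ) := by
    have : (0 : ℤ) < ((k + 1 : ℕ) : ℤ) := by positivity
    exact_mod_cast this
  rw [gt_iff_lt, div_lt_div_iff₀ hk1pos hkpos]
  have key := EDSAux.key_ineq (d := d) m k hm hk1 (by rw [Nat.mul_comm k m]; exact hpc)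
  rw [Nat.mul_comm k m] at key
  push_cast
  push_cast at key
  linarith
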